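/- arXiv:1406.6194 — 4 statements merged into one kernel-verified Lean document; each statement's English description precedes it below -/
import Mathlib

section
/- Let Ω ⊆ ℝ^n be open, let f, g : Ω → ℝ be Lipschitz functions, and let A ⊆ Ω be a measurable set on which f and g agree. Let q ∈ A be a full-density point of A at which f and g are differentiable with df(q) = dg(q), and suppose there exist symmetric bilinear forms D²f(q) and D²g(q) on ℝ^n such that f(q+ξ) = f(q) + df(q)(ξ) + ½ D²f(q)(ξ,ξ) + o(‖ξ‖²) and g(q+ξ) = g(q) + dg(q)(ξ) + ½ D²g(q)(ξ,ξ) + o(‖ξ‖²) as ξ → 0. Then D²f(q) = D²g(q). -/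
open MeasureTheory Filter Topology Metric Asymptotics

private lemma stmt4_bilin_bound {n : ℕ}
    (Q : EuclideanSpace ℝ (Fin n) →ₗ[ℝ] EuclideanSpace ℝ (Fin n) →ₗ[ℝ] ℝ) :
    ∃ M : ℝ, 0 ≤ M ∧ ∀ x y, |Q x y| ≤ M * ‖x‖ * ‖y‖ := by
  let B : EuclideanSpace ℝ (Fin n) →L[ℝ] EuclideanSpace ℝ (Fin n) →L[ℝ] ℝ :=
    LinearMap.toContinuousLinearMap
      ((LinearMap.toContinuousLinearMap :
          (EuclideanSpace ℝ (Fin n) →ₗ[ℝ] ℝ) ≃ₗ[ℝ] (EuclideanSpace ℝ (Fin n) →L[ℝ] ℝ)).toLinearMap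
        ∘ₗ Q)
  have hBapp : ∀ x y, B x y = Q x y := fun x y => rfl
  refine ⟨‖B‖, ContinuousLinearMap.opNorm_nonneg B, fun x y => ?_⟩
  rw [← Real.norm_eq_abs, ← hBapp]
  exact B.le_opNorm₂ x y

private lemma stmt4_arith {c M ε r a b e X vv : ℝ}
    (hc0 : 0 < c) (hM0 : 0 ≤ M) (hε0 : 0 < ε) (hε14 : ε ≤ 1/4)
    (hεM : 2*(M+1)*ε ≤ c/16) (hr0 : 0 < r)
    (hvv : vv = c ∨ vv = -c)
    (ha : |a| ≤ M*(ε*r)) (hb : |b| ≤ M*(ε*r)) (he : |e| ≤ M*(ε*r)*(ε*r))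
    (hX : X = r/2*(r/2*vv) + r/2*a + r/2*b + e)
    (hup : |X| ≤ c/16*r^2) : False := by
  obtain ⟨ha1, ha2⟩ := abs_le.mp ha
  obtain ⟨hb1, hb2⟩ := abs_le.mp hb
  obtain ⟨he1, he2⟩ := abs_le.mp he
  obtain ⟨hu1, hu2⟩ := abs_le.mp hup
  have hr2 : 0 < r^2 := by positivity
  have hMε : M*(ε*r)*(ε*r) ≤ M*ε*r^2/4 := by nlinarith [mul_nonneg hM0 hε0.le]
  rcases hvv with rfl | rfl <;>
    nlinarith [mul_pos hc0 hr2, mul_nonneg (mul_nonneg hM0 hε0.le) hr2.le]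

set_option maxHeartbeats 1600000 in
/-- If two Lipschitz functions `f, g` on an open set `Ω ⊆ ℝ^n` agree on a measurable set
`A ⊆ Ω`, and `q ∈ A` is a full-density point of `A` at which both are differentiable with
equal derivatives and both admit second-order (Alexandrov) expansions with symmetric
quadratic parts `Qf`, `Qg`, then `Qf = Qg`. -/
theorem stmt_4 (n : ℕ) (Ω : Set (EuclideanSpace ℝ (Fin n))) (hΩ : IsOpen Ω)
    (f g : EuclideanSpace ℝ (Fin n) → ℝ)
    (hf : ∃ K : NNReal, LipschitzOnWith K f Ω)
    (hg : ∃ K : NNReal, LipschitzOnWith K g Ω)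
    (A : Set (EuclideanSpace ℝ (Fin n))) (hAΩ : A ⊆ Ω) (hA : MeasurableSet A)
    (heq : Set.EqOn f g A)
    (q : EuclideanSpace ℝ (Fin n)) (hq : q ∈ A)
    (hdens : Tendsto (fun r : ℝ => volume (A ∩ ball q r) / volume (ball q r))
      (𝓝[>] (0 : ℝ)) (𝓝 (1 : ENNReal)))
    (d : EuclideanSpace ℝ (Fin n) →L[ℝ] ℝ)
    (hfd : HasFDerivAt f d q) (hgd : HasFDerivAt g d q)
    (Qf Qg : EuclideanSpace ℝ (Fin n) →ₗ[ℝ] EuclideanSpace ℝ (Fin n) →ₗ[ℝ] ℝ)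
    (hQfsymm : ∀ x y, Qf x y = Qf y x) (hQgsymm : ∀ x y, Qg x y = Qg y x)
    (hexpf : (fun ξ : EuclideanSpace ℝ (Fin n) =>
        f (q + ξ) - f q - d ξ - (1 / 2) * Qf ξ ξ) =o[𝓝 0] fun ξ => ‖ξ‖ ^ 2)
    (hexpg : (fun ξ : EuclideanSpace ℝ (Fin n) =>
        g (q + ξ) - g q - d ξ - (1 / 2) * Qg ξ ξ) =o[𝓝 0] fun ξ => ‖ξ‖ ^ 2) :
    Qf = Qg := by
  classical
  have hfgq : f q = g q := heq hq
  set Q : EuclideanSpace ℝ (Fin n) →ₗ[ℝ] EuclideanSpace ℝ (Fin n) →ₗ[ℝ] ℝ := Qf - Qg with hQ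
  have hQapp : ∀ x y, Q x y = Qf x y - Qg x y := by
    intro x y; simp [hQ]
  obtain ⟨M, hM0, hQbound⟩ := stmt4_bilin_bound Q
  have hlo : (fun ξ : EuclideanSpace ℝ (Fin n) =>
      (f (q + ξ) - f q - d ξ - (1 / 2) * Qf ξ ξ) -
        (g (q + ξ) - g q - d ξ - (1 / 2) * Qg ξ ξ)) =o[𝓝 0] fun ξ => ‖ξ‖ ^ 2 :=
    hexpf.sub hexpg
  -- key claim: Q vanishes on unit vectors
  have key : ∀ v : EuclideanSpace ℝ (Fin n), ‖v‖ = 1 → Q v v = 0 := by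
    intro v hv
    by_contra hc
    set c := |Q v v| with hcdef
    have hc0 : 0 < c := abs_pos.mpr hc
    set ε : ℝ := min (1/4) (c / (32 * (M + 1))) with hε
    have hε0 : 0 < ε := lt_min (by norm_num) (div_pos hc0 (by positivity))
    have hε14 : ε ≤ 1/4 := min_le_left _ _
    have hεM : 2 * (M + 1) * ε ≤ c / 16 := by
      have h1 : ε ≤ c / (32 * (M + 1)) := min_le_right _ _
      rw [le_div_iff₀ (by positivity)] at h1
      linarith
    have hρ := hlo.def (show (0:ℝ) < c/32 by positivity)
    rw [Metric.eventually_nhds_iff] at hρ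
    obtain ⟨ρ, hρ0, hρ'⟩ := hρ
    set δ := ENNReal.ofReal (ε ^ n) with hδ
    have hδ0 : δ ≠ 0 := by
      simp only [hδ, ne_eq, ENNReal.ofReal_eq_zero, not_le]
      positivity
    have hev : ∀ᶠ r in 𝓝[>] (0:ℝ),
        1 - δ < volume (A ∩ ball q r) / volume (ball q r) :=
      hdens.eventually (eventually_gt_nhds
        (ENNReal.sub_lt_self ENNReal.one_ne_top one_ne_zero hδ0))
    have hIoo : Set.Ioo (0:ℝ) ρ ∈ 𝓝[>] (0:ℝ) := Ioo_mem_nhdsGT_of_mem ⟨le_refl _, hρ0⟩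
    obtain ⟨r, hrdens, hr0, hrρ⟩ :
        ∃ r : ℝ, (1 - δ < volume (A ∩ ball q r) / volume (ball q r)) ∧ 0 < r ∧ r < ρ := by
      obtain ⟨r, h1, h2⟩ := (hev.and (eventually_of_mem hIoo (fun r hr => hr))).exists
      exact ⟨r, h1, h2.1, h2.2⟩
    have hεr : ε * r ≤ r / 4 := by nlinarith
    have hεr0 : 0 < ε * r := mul_pos hε0 hr0
    set y : EuclideanSpace ℝ (Fin n) := q + (r/2) • v with hy
    have hrv : ‖(r/2) • v‖ = r/2 := by
      rw [norm_smul, hv, mul_one, Real.norm_eq_abs, abs_of_pos (by linarith)]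
    have hsmallsub : ball y (ε * r) ⊆ ball q r := by
      intro p hp
      rw [mem_ball] at hp ⊢
      have h2 : dist y q = r/2 := by
        rw [hy, dist_eq_norm, add_sub_cancel_left, hrv]
      have h3 : dist p q ≤ dist p y + dist y q := dist_triangle _ _ _
      linarith
    -- the small ball must meet A
    have hne : (A ∩ ball y (ε * r)).Nonempty := by
      by_contra hcon
      rw [Set.not_nonempty_iff_eq_empty] at hcon
      have hsub2 : A ∩ ball q r ⊆ ball q r \ ball y (ε * r) := by
        intro p hp
        refine ⟨hp.2, fun hmem => ?_⟩
        exact Set.eq_empty_iff_forall_notMem.mp hcon p ⟨hp.1, hmem⟩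
      have hμsmall : volume (ball y (ε * r)) = δ * volume (ball q r) := by
        rw [Measure.addHaar_ball_mul_of_pos volume y hε0,
          Measure.addHaar_ball_center volume q, finrank_euclideanSpace_fin]
      have hμb_ne_top : volume (ball q r) ≠ ⊤ := measure_ball_lt_top.ne
      have hμb_ne0 : volume (ball q r) ≠ 0 := (measure_ball_pos _ _ hr0).ne'
      have hle : volume (A ∩ ball q r) ≤ volume (ball q r) - δ * volume (ball q r) := by
        calc volume (A ∩ ball q r) ≤ volume (ball q r \ ball y (ε * r)) := measure_mono hsub2
          _ = volume (ball q r) - volume (ball y (ε * r)) :=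
              measure_diff hsmallsub measurableSet_ball.nullMeasurableSet measure_ball_lt_top.ne
          _ = volume (ball q r) - δ * volume (ball q r) := by rw [hμsmall]
      have hfinal : volume (A ∩ ball q r) / volume (ball q r) ≤ 1 - δ := by
        calc volume (A ∩ ball q r) / volume (ball q r)
            ≤ (volume (ball q r) - δ * volume (ball q r)) / volume (ball q r) :=
              ENNReal.div_le_div_right hle _
          _ = ((1 - δ) * volume (ball q r)) / volume (ball q r) := by
              rw [ENNReal.sub_mul (fun _ _ => hμb_ne_top), one_mul]
          _ = (1 - δ) * (volume (ball q r) / volume (ball q r)) := by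
              rw [mul_div_assoc]
          _ = 1 - δ := by rw [ENNReal.div_self hμb_ne0 hμb_ne_top, mul_one]
      exact absurd hrdens (not_lt.mpr hfinal)
    obtain ⟨p, hpA, hpball⟩ := hne
    set ξ : EuclideanSpace ℝ (Fin n) := p - q with hξ
    have hqξ : q + ξ = p := by rw [hξ]; abel
    set w : EuclideanSpace ℝ (Fin n) := ξ - (r/2) • v with hwdef
    have hwnorm : ‖w‖ < ε * r := by
      have h1 : dist p y < ε * r := mem_ball.mp hpball
      rw [dist_eq_norm, hy] at h1
      have h2 : p - (q + (r/2) • v) = w := by rw [hwdef, hξ]; abel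
      rwa [h2] at h1
    have hξw : ξ = (r/2) • v + w := by rw [hwdef]; abel
    have hξle : ‖ξ‖ ≤ 3/4 * r := by
      have h1 : ‖ξ‖ ≤ ‖(r/2) • v‖ + ‖w‖ := by rw [hξw]; exact norm_add_le _ _
      rw [hrv] at h1
      linarith
    -- upper bound on |Q ξ ξ| from agreement on A
    have hsmall := hρ' (show dist ξ (0 : EuclideanSpace ℝ (Fin n)) < ρ by
      rw [dist_zero_right]; linarith)
    have hfp : f (q + ξ) = g (q + ξ) := by rw [hqξ]; exact heq hpA
    have hup : |Q ξ ξ| ≤ c/16 * r^2 := by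
      rw [hfp, hfgq] at hsmall
      have he : (g (q + ξ) - g q - d ξ - 1/2 * Qf ξ ξ) -
          (g (q + ξ) - g q - d ξ - 1/2 * Qg ξ ξ) = -(1/2 * (Qf ξ ξ - Qg ξ ξ)) := by ring
      have hn : ‖-(1/2 * (Qf ξ ξ - Qg ξ ξ))‖ = 1/2 * |Qf ξ ξ - Qg ξ ξ| := by
        rw [Real.norm_eq_abs, abs_neg, abs_mul]
        norm_num
      rw [he, hn] at hsmall
      have hn2 : ‖‖ξ‖^2‖ = ‖ξ‖^2 := by
        rw [Real.norm_eq_abs, abs_of_nonneg (by positivity)]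
      rw [hn2] at hsmall
      have hsq : ‖ξ‖^2 ≤ r^2 := by nlinarith [norm_nonneg ξ]
      have h32 : c/32 * ‖ξ‖^2 ≤ c/32 * r^2 :=
        mul_le_mul_of_nonneg_left hsq (by positivity)
      rw [hQapp]
      linarith
    -- bilinear expansion and bounds
    have hexpQ : Q ξ ξ = r/2 * (r/2 * Q v v) + r/2 * Q v w + r/2 * Q w v + Q w w := by
      rw [hξw]
      simp only [map_add, LinearMap.add_apply, LinearMapClass.map_smul, LinearMap.smul_apply,
        smul_eq_mul]
      ring
    have hb1 : |Q v w| ≤ M * (ε * r) := by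
      have h := hQbound v w
      rw [hv, mul_one] at h
      exact h.trans (mul_le_mul_of_nonneg_left hwnorm.le hM0)
    have hb2 : |Q w v| ≤ M * (ε * r) := by
      have h := hQbound w v
      rw [hv, mul_one] at h
      calc |Q w v| ≤ M * ‖w‖ := h
        _ ≤ M * (ε * r) := mul_le_mul_of_nonneg_left hwnorm.le hM0
    have hb3 : |Q w w| ≤ M * (ε * r) * (ε * r) := by
      have h := hQbound w w
      calc |Q w w| ≤ M * ‖w‖ * ‖w‖ := h
        _ ≤ M * (ε * r) * (ε * r) :=
          mul_le_mul (mul_le_mul_of_nonneg_left hwnorm.le hM0) hwnorm.le (norm_nonneg w)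
            (by positivity)
    have hvvcases : Q v v = c ∨ Q v v = -c := by
      rcases abs_cases (Q v v) with ⟨h, _⟩ | ⟨h, _⟩
      · left; rw [hcdef, h]
      · right; rw [hcdef, h]; ring
    exact stmt4_arith hc0 hM0 hε0 hε14 hεM hr0 hvvcases hb1 hb2 hb3 hexpQ hup
  -- Q vanishes on the diagonal
  have key2 : ∀ v : EuclideanSpace ℝ (Fin n), Q v v = 0 := by
    intro v
    rcases eq_or_ne v 0 with rfl | hv0
    · simp
    · have hnv : ‖v‖ ≠ 0 := norm_ne_zero_iff.mpr hv0
      have hu : ‖(‖v‖⁻¹ • v)‖ = 1 := by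
        rw [norm_smul, Real.norm_eq_abs, abs_inv, abs_norm, inv_mul_cancel₀ hnv]
      have h0 := key _ hu
      simp only [LinearMapClass.map_smul, LinearMap.smul_apply, smul_eq_mul] at h0
      rcases mul_eq_zero.mp h0 with h | h
      · exact absurd h (inv_ne_zero hnv)
      · rcases mul_eq_zero.mp h with h | h
        · exact absurd h (inv_ne_zero hnv)
        · exact h
  -- polarization
  have hQ0 : Qf - Qg = 0 := by
    rw [← hQ]
    apply LinearMap.ext; intro x; apply LinearMap.ext; intro y
    have h1 := key2 (x + y)
    have h2 := key2 x
    have h3 := key2 y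
    simp only [map_add, LinearMap.add_apply] at h1
    have hsymm : Q x y = Q y x := by
      rw [hQapp, hQapp, hQfsymm x y, hQgsymm x y]
    simp only [LinearMap.zero_apply]
    linarith
  exact sub_eq_zero.mp hQ0
end

section
/- Let B ⊆ ℝ^n be an arbitrary subset, f : B → ℝ a function, C > 0 a constant, and p ↦ a_p a (not necessarily continuous) map B → ℝ^n. Suppose that (1) for all x, p ∈ B, |f(x) − f(p) − ⟨x − p, a_p⟩| ≤ C‖x − p‖², and (2) for all p, q ∈ B and all x ∈ ℝ^n, f(p) + ⟨x − p, a_p⟩ − C‖x − p‖² ≤ f(q) + ⟨x − q, a_q⟩ + C‖x − q‖². Then there exists a function F : ℝ^n → ℝ of class C^{1,1}_loc (that is, F is continuously differentiable and its derivative DF is Lipschitz on every compact subset of ℝ^n) such that F restricted to B equals f. -/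
open scoped RealInnerProductSpace
open Filter Topology InnerProductSpace

/-!
Adding `C‖y‖²` turns the lower support paraboloid of `f` at `p` into an affine function `ℓ_p` and
the upper one at `q` into a function `u_q` with `u_q (y + h) + u_q (y - h) - 2 u_q y = 4C‖h‖²`.
By condition (2) every `ℓ_p` minorizes every `u_q`, so the convex envelope `φ` of `⨅ q, u q` is
squeezed between `ℓ_p` and `u_p` at `p`, i.e. `φ = f + C‖·‖²` on `B`. The envelope inherits the
bound `4C‖h‖²` on second differences, because the midpoint of two affine minorants with slopes
`ξ₁, ξ₂` can be raised by a multiple of `‖ξ₁ - ξ₂‖²` and stay a minorant.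

A convex function with second differences at most `K‖h‖²` is `C^{1,1}`: the slopes of nearly
optimal affine minorants at `x` are approximate subgradients, any two of which are close by the
upper bound, so they converge to a subgradient; a subgradient also gives a quadratic upper bound,
hence is the gradient, and the same comparison shows that the gradient is `2K`-Lipschitz.
Then `F = φ - C‖·‖²` is the extension.
-/

namespace SupportParaboloid

variable {E : Type*} [NormedAddCommGroup E] [InnerProductSpace ℝ E]

def IsApproxSubgradient (φ : E → ℝ) (x : E) (ε : ℝ) (ξ : E) : Prop :=
  ∀ z, φ x + ⟪z - x, ξ⟫ - ε ≤ φ z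

def SemiconcaveWith (K : ℝ) (φ : E → ℝ) : Prop :=
  ∀ x h, φ (x + h) + φ (x - h) ≤ 2 * φ x + K * ‖h‖ ^ 2

section Semiconcave

variable {φ : E → ℝ} {K ε δ : ℝ} {x y ξ η : E}

theorem SemiconcaveWith.le_of_isApproxSubgradient (hφ : SemiconcaveWith K φ)
    (hξ : IsApproxSubgradient φ x ε ξ) (h : E) :
    φ (x + h) ≤ φ x + ⟪h, ξ⟫ + K * ‖h‖ ^ 2 + ε := by
  have lower := hξ (x - h)
  rw [sub_sub_cancel_left, inner_neg_left] at lower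
  linarith [hφ x h]

theorem norm_sub_sq_le_of_isApproxSubgradient (hK : 0 < K) (hξ : IsApproxSubgradient φ x ε ξ)
    (hη : ∀ h, φ (x + h) ≤ φ x + ⟪h, η⟫ + K * ‖h‖ ^ 2 + δ) :
    ‖ξ - η‖ ^ 2 ≤ 4 * K * (ε + δ) := by
  -- compare the two bounds at the step `h` that optimizes them in the direction `ξ - η`
  set h := (2 * K)⁻¹ • (ξ - η)
  have lower := hξ (x + h)
  rw [add_sub_cancel_left] at lower
  have hinner : ⟪h, ξ⟫ - ⟪h, η⟫ = 2 * ((4 * K)⁻¹ * ‖ξ - η‖ ^ 2) := by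
    rw [← inner_sub_right, real_inner_smul_left, real_inner_self_eq_norm_sq]
    field_simp
    ring
  have hnorm : K * ‖h‖ ^ 2 = (4 * K)⁻¹ * ‖ξ - η‖ ^ 2 := by
    rw [norm_smul, mul_pow, Real.norm_eq_abs, sq_abs]
    field_simp
    ring
  have key : (4 * K)⁻¹ * ‖ξ - η‖ ^ 2 ≤ ε + δ := by linarith [hη h]
  rwa [inv_mul_le_iff₀ (by positivity)] at key

theorem SemiconcaveWith.exists_isApproxSubgradient_zero [CompleteSpace E]
    (hφ : SemiconcaveWith K φ) (hK : 0 < K)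
    (happrox : ∀ ε > 0, ∃ ξ, IsApproxSubgradient φ x ε ξ) :
    ∃ ξ, IsApproxSubgradient φ x 0 ξ := by
  -- chosen so that `4K (ε j + ε k) ≤ (1 / (N + 1))²` for `j, k ≥ N`
  set ε : ℕ → ℝ := fun k => (8 * K)⁻¹ * (1 / ((k : ℝ) + 1)) ^ 2
  choose u hu using fun k => happrox (ε k) (by positivity)
  have hdist : ∀ j k N, N ≤ j → N ≤ k → dist (u j) (u k) ≤ 1 / ((N : ℝ) + 1) := by
    intro j k N hj hk
    have hεN : ∀ i, N ≤ i → ε i ≤ ε N := fun i hi => by simp only [ε]; gcongr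
    have hsq := norm_sub_sq_le_of_isApproxSubgradient hK (hu j)
      (hφ.le_of_isApproxSubgradient (hu k))
    have h8 : 8 * K * ε N = (1 / ((N : ℝ) + 1)) ^ 2 := by simp only [ε]; field_simp
    rw [dist_eq_norm, ← pow_le_pow_iff_left₀ (norm_nonneg _) (by positivity) two_ne_zero]
    nlinarith [hεN j hj, hεN k hk]
  obtain ⟨ξ, hξ⟩ := cauchySeq_tendsto_of_complete
    (cauchySeq_of_le_tendsto_0 _ hdist tendsto_one_div_add_atTop_nhds_zero_nat)
  have hε : Tendsto ε atTop (𝓝 0) := by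
    simpa [ε] using (tendsto_one_div_add_atTop_nhds_zero_nat.pow 2).const_mul (8 * K)⁻¹
  refine ⟨ξ, fun z => le_of_tendsto' (x := atTop) ?_ fun k => hu k z⟩
  simpa using (tendsto_const_nhds.add (tendsto_const_nhds.inner hξ)).sub hε

theorem SemiconcaveWith.isApproxSubgradient_of_zero (hφ : SemiconcaveWith K φ)
    (hξ : IsApproxSubgradient φ y 0 ξ) (x : E) :
    IsApproxSubgradient φ x (K * ‖x - y‖ ^ 2) ξ := by
  intro z
  have upper := hφ.le_of_isApproxSubgradient hξ (x - y)
  rw [add_sub_cancel] at upper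
  have hsplit : ⟪z - y, ξ⟫ = ⟪z - x, ξ⟫ + ⟪x - y, ξ⟫ := by
    rw [← inner_add_left, sub_add_sub_cancel]
  linarith [hξ z]

theorem SemiconcaveWith.lipschitzWith_of_isApproxSubgradient (hφ : SemiconcaveWith K φ)
    (hK : 0 < K) {g : E → E} (hg : ∀ x, IsApproxSubgradient φ x 0 (g x)) :
    LipschitzWith (2 * K).toNNReal g := by
  refine LipschitzWith.of_dist_le_mul fun x y => ?_
  have hsq := norm_sub_sq_le_of_isApproxSubgradient hK (hφ.isApproxSubgradient_of_zero (hg y) x)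
    (hφ.le_of_isApproxSubgradient (hg x))
  rw [Real.coe_toNNReal _ (by positivity), dist_eq_norm, dist_eq_norm, norm_sub_rev,
    ← pow_le_pow_iff_left₀ (norm_nonneg _) (by positivity) two_ne_zero]
  linarith

theorem SemiconcaveWith.hasGradientAt [CompleteSpace E] (hφ : SemiconcaveWith K φ)
    (hξ : IsApproxSubgradient φ x 0 ξ) : HasGradientAt φ ξ x := by
  rw [hasGradientAt_iff_isLittleO_nhds_zero]
  refine (Asymptotics.IsBigO.of_bound K (Eventually.of_forall fun h => ?_)).trans_isLittleO
    (Asymptotics.isLittleO_norm_pow_id one_lt_two)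
  have lower := hξ (x + h)
  rw [add_sub_cancel_left] at lower
  have upper := hφ.le_of_isApproxSubgradient hξ h
  rw [real_inner_comm, Real.norm_eq_abs, abs_of_nonneg (by linarith), norm_pow, norm_norm]
  linarith

theorem SemiconcaveWith.exists_lipschitzWith_hasGradientAt [CompleteSpace E]
    (hφ : SemiconcaveWith K φ) (hK : 0 < K)
    (happrox : ∀ x, ∀ ε > 0, ∃ ξ, IsApproxSubgradient φ x ε ξ) :
    ∃ g : E → E, LipschitzWith (2 * K).toNNReal g ∧ ∀ x, HasGradientAt φ (g x) x := by
  choose g hg using fun x => hφ.exists_isApproxSubgradient_zero hK (happrox x)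
  exact ⟨g, hφ.lipschitzWith_of_isApproxSubgradient hK hg, fun x => hφ.hasGradientAt (hg x)⟩

end Semiconcave

section ConvexEnvelope

variable {ι : Type*} (u : ι → E → ℝ)

def affineMinorants : Set (E × ℝ) :=
  {m | ∀ i y, ⟪y, m.1⟫ + m.2 ≤ u i y}

/-- The closed convex envelope of `⨅ i, u i`. The `sSup` is a junk value unless `ι` is nonempty
and `u` has an affine minorant. -/
noncomputable def convexEnvelope (x : E) : ℝ :=
  sSup ((fun m : E × ℝ => ⟪x, m.1⟫ + m.2) '' affineMinorants u)

variable {u} {K : ℝ}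

theorem le_convexEnvelope [Nonempty ι] {m : E × ℝ} (hm : m ∈ affineMinorants u) (x : E) :
    ⟪x, m.1⟫ + m.2 ≤ convexEnvelope u x := by
  refine le_csSup ⟨u (Classical.arbitrary ι) x, ?_⟩ (Set.mem_image_of_mem _ hm)
  rintro _ ⟨m', hm', rfl⟩
  exact hm' _ x

theorem convexEnvelope_le (hu : (affineMinorants u).Nonempty) (i : ι) (x : E) :
    convexEnvelope u x ≤ u i x :=
  csSup_le (hu.image _) fun _ ⟨_, hm, hv⟩ => hv ▸ hm i x

theorem exists_lt_of_lt_convexEnvelope (hu : (affineMinorants u).Nonempty) {x : E} {t : ℝ}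
    (ht : t < convexEnvelope u x) : ∃ m ∈ affineMinorants u, t < ⟪x, m.1⟫ + m.2 := by
  obtain ⟨_, ⟨m, hm, rfl⟩, hlt⟩ := exists_lt_of_lt_csSup (hu.image _) ht
  exact ⟨m, hm, hlt⟩

theorem exists_isApproxSubgradient_convexEnvelope [Nonempty ι]
    (hu : (affineMinorants u).Nonempty) (x : E) {ε : ℝ} (hε : 0 < ε) :
    ∃ ξ, IsApproxSubgradient (convexEnvelope u) x ε ξ := by
  obtain ⟨m, hm, hlt⟩ := exists_lt_of_lt_convexEnvelope hu (sub_lt_self (convexEnvelope u x) hε)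
  refine ⟨m.1, fun z => ?_⟩
  rw [inner_sub_left]
  linarith [le_convexEnvelope hm z]

theorem midpoint_mem_affineMinorants (hK : 0 < K) (hu : ∀ i, SemiconcaveWith K (u i))
    {ξ₁ ξ₂ : E} {c₁ c₂ : ℝ} (h₁ : (ξ₁, c₁) ∈ affineMinorants u) (h₂ : (ξ₂, c₂) ∈ affineMinorants u) :
    ((2 : ℝ)⁻¹ • (ξ₁ + ξ₂), (c₁ + c₂) / 2 + ‖ξ₁ - ξ₂‖ ^ 2 / (8 * K)) ∈ affineMinorants u := by
  intro i y
  set h := (2 * K)⁻¹ • (ξ₁ - ξ₂)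
  have hinner : ⟪h, ξ₁⟫ - ⟪h, ξ₂⟫ = 4 * (‖ξ₁ - ξ₂‖ ^ 2 / (8 * K)) := by
    rw [← inner_sub_right, real_inner_smul_left, real_inner_self_eq_norm_sq]
    field_simp
    ring
  have hnorm : K * ‖h‖ ^ 2 = 2 * (‖ξ₁ - ξ₂‖ ^ 2 / (8 * K)) := by
    rw [norm_smul, mul_pow, Real.norm_eq_abs, sq_abs]
    field_simp
    ring
  have hmid : ⟪y, (2 : ℝ)⁻¹ • (ξ₁ + ξ₂)⟫ = (⟪y, ξ₁⟫ + ⟪y, ξ₂⟫) / 2 := by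
    rw [real_inner_smul_right, inner_add_right]
    ring
  have hA : ⟪y + h, ξ₁⟫ + c₁ ≤ u i (y + h) := h₁ i (y + h)
  have hB : ⟪y - h, ξ₂⟫ + c₂ ≤ u i (y - h) := h₂ i (y - h)
  rw [inner_add_left] at hA
  rw [inner_sub_left] at hB
  dsimp only
  linarith [hu i y h]

theorem semiconcaveWith_convexEnvelope [Nonempty ι] (hK : 0 < K)
    (hu : ∀ i, SemiconcaveWith K (u i)) (hne : (affineMinorants u).Nonempty) :
    SemiconcaveWith K (convexEnvelope u) := by
  intro x h
  refine le_of_forall_pos_le_add fun ε hε => ?_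
  obtain ⟨⟨ξ₁, c₁⟩, h₁, hlt₁⟩ :=
    exists_lt_of_lt_convexEnvelope hne (sub_lt_self (convexEnvelope u (x + h)) (half_pos hε))
  obtain ⟨⟨ξ₂, c₂⟩, h₂, hlt₂⟩ :=
    exists_lt_of_lt_convexEnvelope hne (sub_lt_self (convexEnvelope u (x - h)) (half_pos hε))
  have hmid := le_convexEnvelope (midpoint_mem_affineMinorants hK hu h₁ h₂) x
  dsimp only at hlt₁ hlt₂ hmid
  rw [inner_add_left] at hlt₁
  rw [inner_sub_left] at hlt₂
  rw [real_inner_smul_right, inner_add_right] at hmid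
  have amgm : ⟪h, ξ₁⟫ - ⟪h, ξ₂⟫ ≤ K * ‖h‖ ^ 2 + 2 * (‖ξ₁ - ξ₂‖ ^ 2 / (8 * K)) := by
    have hsq : 0 ≤ (2 * K * ‖h‖ - ‖ξ₁ - ξ₂‖) ^ 2 / (4 * K) := by positivity
    have hcs := real_inner_le_norm h (ξ₁ - ξ₂)
    rw [inner_sub_right] at hcs
    have : (2 * K * ‖h‖ - ‖ξ₁ - ξ₂‖) ^ 2 / (4 * K)
        = K * ‖h‖ ^ 2 + 2 * (‖ξ₁ - ξ₂‖ ^ 2 / (8 * K)) - ‖h‖ * ‖ξ₁ - ξ₂‖ := by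
      field_simp
      ring
    linarith
  linarith

end ConvexEnvelope

section Paraboloids

variable (f : E → ℝ) (a : E → E) (C : ℝ)

noncomputable def liftedUpperParaboloid (q y : E) : ℝ :=
  f q + ⟪y - q, a q⟫ + C * ‖y - q‖ ^ 2 + C * ‖y‖ ^ 2

theorem semiconcaveWith_liftedUpperParaboloid (q : E) :
    SemiconcaveWith (4 * C) (liftedUpperParaboloid f a C q) := by
  intro y h
  have e₁ : y + h - q = y - q + h := add_sub_right_comm y h q
  have e₂ : y - h - q = y - q - h := sub_right_comm y h q
  simp only [liftedUpperParaboloid, e₁, e₂, norm_add_sq_real, norm_sub_sq_real, inner_add_left,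
    inner_sub_left]
  linarith

theorem lowerParaboloid_add_norm_sq (p y : E) :
    f p + ⟪y - p, a p⟫ - C * ‖y - p‖ ^ 2 + C * ‖y‖ ^ 2
      = ⟪y, a p + (2 * C) • p⟫ + (f p - ⟪p, a p⟫ - C * ‖p‖ ^ 2) := by
  rw [norm_sub_sq_real, inner_sub_left, inner_add_right, real_inner_smul_right]
  ring

variable {B : Set E} {f a C}

theorem lowerParaboloid_mem_affineMinorants
    (h2 : ∀ p ∈ B, ∀ q ∈ B, ∀ x : E,
      f p + ⟪x - p, a p⟫ - C * ‖x - p‖ ^ 2 ≤ f q + ⟪x - q, a q⟫ + C * ‖x - q‖ ^ 2)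
    {p : E} (hp : p ∈ B) :
    (a p + (2 * C) • p, f p - ⟪p, a p⟫ - C * ‖p‖ ^ 2)
      ∈ affineMinorants fun q : B => liftedUpperParaboloid f a C q := by
  intro q y
  dsimp only [liftedUpperParaboloid]
  rw [← lowerParaboloid_add_norm_sq]
  linarith [h2 p hp q q.2 y]

theorem convexEnvelope_liftedUpperParaboloid
    (h2 : ∀ p ∈ B, ∀ q ∈ B, ∀ x : E,
      f p + ⟪x - p, a p⟫ - C * ‖x - p‖ ^ 2 ≤ f q + ⟪x - q, a q⟫ + C * ‖x - q‖ ^ 2)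
    {p : E} (hp : p ∈ B) :
    convexEnvelope (fun q : B => liftedUpperParaboloid f a C q) p = f p + C * ‖p‖ ^ 2 := by
  have : Nonempty B := ⟨⟨p, hp⟩⟩
  have hlower := le_convexEnvelope (lowerParaboloid_mem_affineMinorants h2 hp) p
  have hupper := convexEnvelope_le ⟨_, lowerParaboloid_mem_affineMinorants h2 hp⟩ ⟨p, hp⟩ p
  rw [← lowerParaboloid_add_norm_sq] at hlower
  simp only [liftedUpperParaboloid, sub_self, inner_zero_left, norm_zero] at hlower hupper
  apply le_antisymm <;> linarith

end Paraboloids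

end SupportParaboloid

open SupportParaboloid

theorem stmt_5_general (n : ℕ) (B : Set (EuclideanSpace ℝ (Fin n)))
    (f : EuclideanSpace ℝ (Fin n) → ℝ) (C : ℝ) (hC : 0 < C)
    (a : EuclideanSpace ℝ (Fin n) → EuclideanSpace ℝ (Fin n))
    (h2 : ∀ p ∈ B, ∀ q ∈ B, ∀ x : EuclideanSpace ℝ (Fin n),
      f p + ⟪x - p, a p⟫ - C * ‖x - p‖ ^ 2 ≤ f q + ⟪x - q, a q⟫ + C * ‖x - q‖ ^ 2) :
    ∃ F : EuclideanSpace ℝ (Fin n) → ℝ,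
      (∀ x ∈ B, F x = f x) ∧ ContDiff ℝ 1 F ∧
        ∀ K : Set (EuclideanSpace ℝ (Fin n)), IsCompact K →
          ∃ L : NNReal, LipschitzOnWith L (fderiv ℝ F) K := by
  rcases B.eq_empty_or_nonempty with rfl | ⟨p₀, hp₀⟩
  · exact ⟨0, by simp, contDiff_const, fun K _ => ⟨0, by simp⟩⟩
  have : Nonempty B := ⟨⟨p₀, hp₀⟩⟩
  set u : B → EuclideanSpace ℝ (Fin n) → ℝ := fun q => liftedUpperParaboloid f a C q
  have hne : (affineMinorants u).Nonempty := ⟨_, lowerParaboloid_mem_affineMinorants h2 hp₀⟩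
  have hφ : SemiconcaveWith (4 * C) (convexEnvelope u) :=
    semiconcaveWith_convexEnvelope (by positivity)
      (fun q => semiconcaveWith_liftedUpperParaboloid f a C q) hne
  obtain ⟨g, hg, hφg⟩ := hφ.exists_lipschitzWith_hasGradientAt (by positivity)
    fun x _ hε => exists_isApproxSubgradient_convexEnvelope hne x hε
  set F := fun x => convexEnvelope u x - C * ‖x‖ ^ 2
  have hF : ∀ x, HasFDerivAt F (toDual ℝ _ (g x - (2 * C) • x)) x := fun x => by
    refine ((hφg x).hasFDerivAt.sub ((hasStrictFDerivAt_norm_sq x).hasFDerivAt.const_mul C))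
      |>.congr_fderiv ?_
    ext y
    simp only [sub_apply, toDual_apply_apply, smul_apply, coe_innerSL_apply, nsmul_eq_mul,
      Nat.cast_ofNat, smul_eq_mul, inner_sub_left, real_inner_smul_left]
    ring
  obtain ⟨L, hlip⟩ : ∃ L, LipschitzWith L (fderiv ℝ F) := by
    rw [funext fun x => (hF x).fderiv]
    exact ⟨_, (toDual ℝ _).lipschitz.comp (hg.sub (lipschitzWith_smul (2 * C)))⟩
  refine ⟨F, fun p hp => ?_, contDiff_one_iff_fderiv.2
    ⟨fun x => (hF x).differentiableAt, hlip.continuous⟩, fun K _ => ⟨_, hlip.lipschitzOnWith⟩⟩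
  simp only [F, u, convexEnvelope_liftedUpperParaboloid h2 hp]
  ring

/-- Whitney-type extension: if `f : B → ℝ` (for an arbitrary `B ⊆ ℝ^n`) admits global upper
and lower support paraboloids of opening `C` (condition 1) whose lower paraboloids stay below
the upper ones (condition 2), then `f` extends to a `C^{1,1}_loc` function `F : ℝ^n → ℝ`,
i.e. `F` is `C^1` and its derivative is Lipschitz on every compact set. -/
theorem stmt_5 (n : ℕ) (B : Set (EuclideanSpace ℝ (Fin n)))
    (f : EuclideanSpace ℝ (Fin n) → ℝ) (C : ℝ) (hC : 0 < C)
    (a : EuclideanSpace ℝ (Fin n) → EuclideanSpace ℝ (Fin n))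
    (h1 : ∀ x ∈ B, ∀ p ∈ B, abs (f x - f p - ⟪x - p, a p⟫) ≤ C * ‖x - p‖ ^ 2)
    (h2 : ∀ p ∈ B, ∀ q ∈ B, ∀ x : EuclideanSpace ℝ (Fin n),
      f p + ⟪x - p, a p⟫ - C * ‖x - p‖ ^ 2 ≤ f q + ⟪x - q, a q⟫ + C * ‖x - q‖ ^ 2) :
    ∃ F : EuclideanSpace ℝ (Fin n) → ℝ,
      (∀ x ∈ B, F x = f x) ∧ ContDiff ℝ 1 F ∧
        ∀ K : Set (EuclideanSpace ℝ (Fin n)), IsCompact K →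
          ∃ L : NNReal, LipschitzOnWith L (fderiv ℝ F) K :=
  stmt_5_general n B f C hC a h2
end

section
/- Let v : (−∞, 0] → ℝ be twice differentiable with v′(t) > 0 for all t ≤ 0. Suppose v is bounded on (−∞, 0], and suppose there is a constant M such that |v″(t)/v′(t)| ≤ M for all t ≤ 0. Then v′ is bounded on (−∞, 0]. -/
/-!
Since `(log v')' = v''/v'` is bounded by `M`, the value of `v'` changes by at most a factor
`exp M` on any interval of length one. On `[t - 1, t]` the mean value theorem gives a point
where `v'` equals `v t - v (t - 1) ≤ 2 B`, so `v' t ≤ 2 B exp M`.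
-/

open Real Set

theorem abs_log_sub_log_le_of_abs_logDeriv_le {f f' : ℝ → ℝ} {s : Set ℝ} {M : ℝ}
    (hs : Convex ℝ s) (hf : ∀ x ∈ s, HasDerivWithinAt f (f' x) s x)
    (hpos : ∀ x ∈ s, 0 < f x) (hM : ∀ x ∈ s, |f' x / f x| ≤ M)
    {x y : ℝ} (hx : x ∈ s) (hy : y ∈ s) :
    |log (f y) - log (f x)| ≤ M * |y - x| := by
  have hlog : ∀ z ∈ s, HasDerivWithinAt (fun z => log (f z)) (f' z / f z) s z := fun z hz =>
    (hf z hz).log (hpos z hz).ne'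
  simpa only [Real.norm_eq_abs] using
    hs.norm_image_sub_le_of_norm_hasDerivWithin_le hlog hM hx hy

theorem le_mul_exp_of_abs_logDeriv_le {f f' : ℝ → ℝ} {s : Set ℝ} {M : ℝ}
    (hs : Convex ℝ s) (hf : ∀ x ∈ s, HasDerivWithinAt f (f' x) s x)
    (hpos : ∀ x ∈ s, 0 < f x) (hM : ∀ x ∈ s, |f' x / f x| ≤ M)
    {x y : ℝ} (hx : x ∈ s) (hy : y ∈ s) :
    f y ≤ f x * exp (M * |y - x|) := by
  have h := (abs_le.mp (abs_log_sub_log_le_of_abs_logDeriv_le hs hf hpos hM hx hy)).2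
  calc f y = exp (log (f y)) := (exp_log (hpos y hy)).symm
    _ ≤ exp (log (f x) + M * |y - x|) := exp_le_exp.mpr (by linarith)
    _ = f x * exp (M * |y - x|) := by rw [exp_add, exp_log (hpos x hx)]

theorem exists_hasDerivWithinAt_eq_slope_of_Icc_subset {f f' : ℝ → ℝ} {s : Set ℝ} {a b : ℝ}
    (hab : a < b) (hs : Icc a b ⊆ s) (hf : ∀ x ∈ s, HasDerivWithinAt f (f' x) s x) :
    ∃ c ∈ Ioo a b, f' c = (f b - f a) / (b - a) :=
  exists_hasDerivAt_eq_slope f f' hab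
    (fun x hx => (hf x (hs hx)).continuousWithinAt.mono hs)
    (fun x hx => (hf x (hs (Ioo_subset_Icc_self hx))).hasDerivAt
      (Filter.mem_of_superset (Ioo_mem_nhds hx.1 hx.2) (Ioo_subset_Icc_self.trans hs)))

/-- If `v` is twice differentiable on `(-∞, 0]` with `v' > 0`, `v` bounded, and
`|v''/v'| ≤ M` there, then `v'` is bounded on `(-∞, 0]`. -/
theorem stmt_8 (v v' v'' : ℝ → ℝ) (M : ℝ)
    (hd1 : ∀ t ≤ (0 : ℝ), HasDerivWithinAt v (v' t) (Set.Iic 0) t)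
    (hd2 : ∀ t ≤ (0 : ℝ), HasDerivWithinAt v' (v'' t) (Set.Iic 0) t)
    (hpos : ∀ t ≤ (0 : ℝ), 0 < v' t)
    (hbd : ∃ B : ℝ, ∀ t ≤ (0 : ℝ), |v t| ≤ B)
    (hM : ∀ t ≤ (0 : ℝ), |v'' t / v' t| ≤ M) :
    ∃ C : ℝ, ∀ t ≤ (0 : ℝ), |v' t| ≤ C := by
  obtain ⟨B, hB⟩ := hbd
  have hM0 : 0 ≤ M := (abs_nonneg _).trans (hM 0 le_rfl)
  refine ⟨2 * B * exp M, fun t ht => ?_⟩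
  obtain ⟨c, ⟨hc₁, hc₂⟩, hc⟩ := exists_hasDerivWithinAt_eq_slope_of_Icc_subset
    (sub_one_lt t) (fun x hx => hx.2.trans ht) hd1
  have hc0 : c ≤ 0 := (hc₂.trans_le ht).le
  have hvc : v' c ≤ 2 * B := by
    rw [hc, sub_sub_cancel, div_one]
    linarith [(abs_le.mp (hB t ht)).2, (abs_le.mp (hB (t - 1) (by linarith))).1]
  have hdist : M * |t - c| ≤ M :=
    mul_le_of_le_one_right hM0 (abs_le.mpr ⟨by linarith, by linarith⟩)
  rw [abs_of_pos (hpos t ht)]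
  calc v' t ≤ v' c * exp (M * |t - c|) :=
        le_mul_exp_of_abs_logDeriv_le (convex_Iic 0) hd2 hpos hM hc0 ht
    _ ≤ 2 * B * exp M :=
        mul_le_mul hvc (exp_le_exp.mpr hdist) (exp_pos _).le ((hpos c hc0).le.trans hvc)
end

section
/- Let V be a finite-dimensional real vector space, let g be a symmetric bilinear form on V, and let v ∈ V satisfy g(v,v) = −1. Suppose g is positive definite on the g-orthogonal complement of v, i.e. g(x,x) > 0 for every nonzero x with g(x,v) = 0. Then the symmetric bilinear form σ defined by σ(x,y) = g(x,y) + 2 g(x,v) g(y,v) is positive definite on V. -/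
/-- If `g` is a symmetric bilinear form on a finite-dimensional real vector space `V`,
`v ∈ V` has `g(v,v) = -1`, and `g` is positive definite on the `g`-orthogonal complement
of `v`, then `σ(x,y) = g(x,y) + 2 g(x,v) g(y,v)` is positive definite on `V`. -/
theorem stmt_9 (V : Type*) [AddCommGroup V] [Module ℝ V] [FiniteDimensional ℝ V]
    (g : V →ₗ[ℝ] V →ₗ[ℝ] ℝ) (hsym : ∀ x y : V, g x y = g y x)
    (v : V) (hv : g v v = -1)
    (hpos : ∀ x : V, x ≠ 0 → g x v = 0 → 0 < g x x) :
    ∀ x : V, x ≠ 0 → 0 < g x x + 2 * g x v * g x v := by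
  intro x hx
  have hc : g x v = g x v := rfl
  set c : ℝ := g x v with hc
  have hwv : g (x + c • v) v = 0 := by
    rw [map_add, LinearMap.add_apply, map_smul, LinearMap.smul_apply, hv]
    simp [← hc]
  set w : V := x + c • v with hw
  have hxw : x = w - c • v := by rw [hw]; abel
  have hvw : g v w = 0 := (hsym v w).trans hwv
  have hgww : g x x + 2 * g x v * g x v = g w w + c * c := by
    rw [hxw]
    rw [show g (w - c • v) (w - c • v) = g w w - c * g v w - (c * g w v - c * (c * g v v)) by
      simp [map_sub, map_smul, mul_sub]]
    rw [show g (w - c • v) v = g w v - c * g v v by simp [map_sub, map_smul]]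
    rw [hwv, hvw, hv]
    ring
  rw [hgww]
  by_cases hw0 : w = 0
  · have hc0 : c ≠ 0 := by
      intro h
      apply hx
      rw [hxw, hw0, h]
      simp
    rw [hw0]
    simpa using mul_self_pos.mpr hc0
  · have h1 := hpos w hw0 hwv
    nlinarith [mul_self_nonneg c]
end
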